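/- arXiv:1407.7495 — 2 statements merged into one kernel-verified Lean document; each statement's English description precedes it below -/
import Mathlib

section
/- For a Tychonoff space X, βX \ X is Menger if and only if for every compactification Y of X, Y \ X is Menger. -/
open Set

/-- A space is Menger if for every sequence of open covers one can choose finite
subfamilies whose union is a cover. -/
def Menger (X : Type*) [TopologicalSpace X] : Prop :=
  ∀ U : ℕ → Set (Set X),
    (∀ n, (∀ s ∈ U n, IsOpen s) ∧ ⋃₀ U n = Set.univ) →
    ∃ V : ℕ → Set (Set X),
      (∀ n, V n ⊆ U n ∧ (V n).Finite) ∧ ⋃₀ (⋃ n, V n) = Set.univ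

/-- A family of open sets is an almost covering if the complement of its union is compact. -/
def AlmostCover {X : Type*} [TopologicalSpace X] (U : Set (Set X)) : Prop :=
  (∀ s ∈ U, IsOpen s) ∧ IsCompact (⋃₀ U)ᶜ

/-- The selection principle `S_fin(𝓐,𝓐)` for almost coverings. -/
def SfinAA (X : Type*) [TopologicalSpace X] : Prop :=
  ∀ U : ℕ → Set (Set X), (∀ n, AlmostCover (U n)) →
    ∃ V : ℕ → Set (Set X),
      (∀ n, V n ⊆ U n ∧ (V n).Finite) ∧ IsCompact (⋃₀ (⋃ n, V n))ᶜ

/-- A sequence of sets is a closed net at `K` if each member is closed and contains `K`,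
and every open neighborhood of `K` contains some member. -/
def ClosedNetSeqAt {X : Type*} [TopologicalSpace X] (F : ℕ → Set X) (K : Set X) : Prop :=
  (∀ n, IsClosed (F n) ∧ K ⊆ F n) ∧
    ∀ A : Set X, IsOpen A → K ⊆ A → ∃ n, F n ⊆ A

/-- A decreasing closed net at `K`. -/
def DecClosedNetSeqAt {X : Type*} [TopologicalSpace X] (F : ℕ → Set X) (K : Set X) : Prop :=
  (∀ n, F (n + 1) ⊆ F n) ∧ ClosedNetSeqAt F K

/-- A compact set `Q` has a countable (outer) neighborhood base in `X`. -/
def HasCountableOuterBase {X : Type*} [TopologicalSpace X] (Q : Set X) : Prop :=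
  ∃ B : ℕ → Set X, (∀ k, IsOpen (B k) ∧ Q ⊆ B k) ∧
    ∀ A : Set X, IsOpen A → Q ⊆ A → ∃ k, B k ⊆ A

/-- `X` is of countable type: every compact set is contained in a compact set having a
countable neighborhood base in `X`. -/
def CountableType (X : Type*) [TopologicalSpace X] : Prop :=
  ∀ K : Set X, IsCompact K → ∃ Q : Set X, IsCompact Q ∧ K ⊆ Q ∧ HasCountableOuterBase Q

/-- The remainder `βX \ X` of the Stone–Čech compactification. -/
abbrev StoneCechRemainder (X : Type*) [TopologicalSpace X] : Set (StoneCech X) :=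
  (Set.range (stoneCechUnit : X → StoneCech X))ᶜ

universe u

section Aux

open Topology Filter Function

/-- The Menger property is preserved by continuous surjections. -/
lemma menger_of_surjective {A B : Type*} [TopologicalSpace A] [TopologicalSpace B]
    {f : A → B} (hc : Continuous f) (hs : Function.Surjective f) (hA : Menger A) : Menger B := by
  intro U hU
  obtain ⟨V', hV', hcov⟩ := hA (fun n => (fun s => f ⁻¹' s) '' U n) (by
    intro n
    refine ⟨?_, ?_⟩
    · rintro _ ⟨s, hs', rfl⟩
      exact ((hU n).1 s hs').preimage hc
    · rw [sUnion_image, ← preimage_sUnion, (hU n).2, preimage_univ])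
  refine ⟨fun n => {s ∈ U n | f ⁻¹' s ∈ V' n}, fun n => ⟨fun s hs' => hs'.1, ?_⟩, ?_⟩
  · have hinj : Function.Injective (fun s : Set B => f ⁻¹' s) := Set.preimage_injective.mpr hs
    exact Set.Finite.subset (((hV' n).2).preimage hinj.injOn) (fun s hs' => hs'.2)
  · apply eq_univ_of_forall
    intro b
    obtain ⟨a, rfl⟩ := hs b
    have ha : a ∈ ⋃₀ ⋃ n, V' n := hcov ▸ mem_univ a
    obtain ⟨t, ht, hat⟩ := ha
    obtain ⟨n, hn⟩ := mem_iUnion.1 ht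
    obtain ⟨s, hsU, rfl⟩ := (hV' n).1 hn
    exact ⟨s, mem_iUnion.2 ⟨n, hsU, hn⟩, hat⟩

variable {X : Type u} [TopologicalSpace X]

lemma isEmbedding_stoneCechUnit' [T35Space X] :
    Topology.IsEmbedding (stoneCechUnit : X → StoneCech X) := by
  refine ⟨isInducing_iff_nhds.2 fun x => le_antisymm
    (map_le_iff_le_comap.1 (continuous_stoneCechUnit.tendsto x)) ?_,
    injective_stoneCechUnit_of_t35Space⟩
  intro U hU
  obtain ⟨U', hU'U, hU'o, hxU'⟩ := mem_nhds_iff.1 hU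
  obtain ⟨g, hgc, hgx, hgK⟩ :=
    CompletelyRegularSpace.completely_regular x U'ᶜ hU'o.isClosed_compl (by simpa using hxU')
  refine mem_comap.2 ⟨stoneCechExtend hgc ⁻¹' {(1 : unitInterval)}ᶜ, ?_, ?_⟩
  · refine (isClosed_singleton.isOpen_compl.preimage (continuous_stoneCechExtend hgc)).mem_nhds ?_
    have : stoneCechExtend hgc (stoneCechUnit x) = g x := congrFun (stoneCechExtend_extends hgc) x
    simp only [mem_preimage, mem_compl_iff, mem_singleton_iff, this, hgx]
    exact zero_ne_one
  · intro z hz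
    simp only [mem_preimage, mem_compl_iff, mem_singleton_iff] at hz
    refine hU'U ?_
    by_contra hzU'
    apply hz
    have h1 : stoneCechExtend hgc (stoneCechUnit z) = g z :=
      congrFun (stoneCechExtend_extends hgc) z
    rw [h1]
    simpa using hgK hzU' 

end Aux


theorem stmt15 {X : Type u} [TopologicalSpace X] [T35Space X] :
    Menger ↥(StoneCechRemainder X) ↔
      ∀ (Y : Type u) (_ : TopologicalSpace Y) (_ : CompactSpace Y) (_ : T2Space Y)
        (e : X → Y), Topology.IsEmbedding e → DenseRange e → Menger ↥((Set.range e)ᶜ) := by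
  constructor
  · intro hM Y _ _ _ e he hd
    have hec : Continuous e := he.continuous
    set f := stoneCechExtend hec with hf
    have hfe : ∀ x, f (stoneCechUnit x) = e x := congrFun (stoneCechExtend_extends hec)
    have hfc : Continuous f := continuous_stoneCechExtend hec
    have hfs : Function.Surjective f := by
      have h1 : IsClosed (range f) := (isCompact_range hfc).isClosed
      have h2 : range e ⊆ range f := by
        rintro _ ⟨x, rfl⟩; exact ⟨stoneCechUnit x, hfe x⟩
      have h3 : closure (range e) ⊆ range f := h1.closure_subset_iff.2 h2
      rw [hd.closure_range] at h3
      exact fun y => h3 (mem_univ y)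
    have lemA : ∀ p : StoneCech X, p ∉ Set.range (stoneCechUnit : X → StoneCech X) →
        f p ∉ range e := by
      intro p hp hcon
      obtain ⟨x, hx⟩ := hcon
      have hne : p ≠ stoneCechUnit x := by rintro rfl; exact hp ⟨x, rfl⟩
      obtain ⟨U, W, hUo, hWo, hpU, hxW, hUW⟩ := t2_separation hne
      set A := (stoneCechUnit : X → StoneCech X) ⁻¹' U with hA
      have h1 : p ∈ closure (stoneCechUnit '' A) := by
        rw [hA, image_preimage_eq_inter_range]
        exact denseRange_stoneCechUnit.open_subset_closure_inter hUo hpU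
      have h2 : f p ∈ closure (e '' A) := by
        have h3 : f p ∈ f '' closure (stoneCechUnit '' A) := ⟨p, h1, rfl⟩
        have h4 := image_closure_subset_closure_image hfc h3
        rwa [image_image, show (fun a => f (stoneCechUnit a)) = e from funext hfe] at h4
      have h5 : x ∈ closure A := by
        rw [he.closure_eq_preimage_closure_image]
        exact mem_preimage.2 (hx ▸ h2)
      have h6 : stoneCechUnit x ∈ closure (stoneCechUnit '' A) :=
        image_closure_subset_closure_image continuous_stoneCechUnit ⟨x, h5, rfl⟩
      have h7 : closure (stoneCechUnit '' A) ⊆ Wᶜ := by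
        apply closure_minimal ?_ hWo.isClosed_compl
        intro a ha haW
        exact Set.disjoint_left.1 hUW (image_preimage_subset _ _ ha) haW
      exact h7 h6 hxW
    let g : ↥(StoneCechRemainder X) → ↥((Set.range e)ᶜ) := fun p => ⟨f p.1, lemA p.1 p.2⟩
    have hgc : Continuous g := (hfc.comp continuous_subtype_val).subtype_mk _
    have hgs : Function.Surjective g := by
      rintro ⟨y, hy⟩
      obtain ⟨p, rfl⟩ := hfs y
      have hp : p ∈ StoneCechRemainder X := by
        rintro ⟨x, rfl⟩
        exact hy ⟨x, (hfe x).symm⟩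
      exact ⟨⟨p, hp⟩, rfl⟩
    exact menger_of_surjective hgc hgs hM
  · intro h
    exact h (StoneCech X) inferInstance inferInstance inferInstance stoneCechUnit
      isEmbedding_stoneCechUnit' denseRange_stoneCechUnit
end

section
/- The space of irrational numbers is Menger at infinity but does not satisfy S_fin(𝓐,𝓐). -/
open Set

/-!
The irrationals `X` embed into the one-point compactification of `ℝ` with countable remainder
`ℚ ∪ {∞}`. Extending this embedding to `βX`, the remainder `βX \ X` is exactly the preimage of
`ℚ ∪ {∞}`, a countable union of compact fibres; so it is σ-compact, hence Menger.

`S_fin(𝓐,𝓐)` implies Menger: apply it to all covers but the first, and cover the compact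
leftover by finitely many members of the first one. The irrationals are not Menger: the open
sets "more than `n` of the first `k` binary digits are `1`" form, for each `n`, a cover of `X`
increasing in `k`, so a Menger selection would give bounds `K n` with every irrational having
more than `n` ones among its first `K n` digits. Numbers `∑_{p ∈ S} 2^-(p+1)` with `S` inside a
sparse set of positions violate this, and since there are uncountably many of them one is
irrational.
-/

open Filter Topology

theorem menger_of_sigmaCompactSpace (X : Type*) [TopologicalSpace X] [SigmaCompactSpace X] :
    Menger X := by
  intro U hU
  have hsub : ∀ n, ∃ V ⊆ U n, V.Finite ∧ compactCovering X n ⊆ ⋃₀ V := fun n => by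
    simpa only [sUnion_eq_biUnion] using
      (isCompact_compactCovering X n).elim_finite_subcover_image (hU n).1
        (by rw [← sUnion_eq_biUnion, (hU n).2]; exact subset_univ _)
  choose V hVU hVfin hV using hsub
  refine ⟨V, fun n => ⟨hVU n, hVfin n⟩, eq_univ_of_forall fun x => ?_⟩
  obtain ⟨n, hn⟩ := mem_iUnion.1 ((iUnion_compactCovering X).symm ▸ mem_univ x)
  exact sUnion_mono (subset_iUnion V n) (hV n hn)

theorem IsSigmaCompact.menger {X : Type*} [TopologicalSpace X] {s : Set X}
    (hs : IsSigmaCompact s) : Menger s :=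
  have := isSigmaCompact_iff_sigmaCompactSpace.1 hs
  menger_of_sigmaCompactSpace s

theorem Set.Countable.isSigmaCompact {X : Type*} [TopologicalSpace X] {s : Set X}
    (hs : s.Countable) : IsSigmaCompact s := by
  simpa using isSigmaCompact_biUnion hs fun x _ => (isCompact_singleton (x := x)).isSigmaCompact

theorem preimage_range_eq_range_stoneCechUnit {X Z : Type*} [TopologicalSpace X]
    [TopologicalSpace Z] [CompactSpace Z] [T2Space Z] {c : X → Z} (hc : IsInducing c) :
    stoneCechExtend hc.continuous ⁻¹' range c = range (stoneCechUnit : X → StoneCech X) := by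
  have hext := stoneCechExtend_extends hc.continuous
  refine Subset.antisymm ?_ ?_
  · -- `p` is a limit of the filter `F` on `X`, which converges to `x` because `c` is inducing.
    rintro p ⟨x, hx⟩
    let F := comap stoneCechUnit (𝓝 p)
    have : F.NeBot := comap_neBot fun s hs => by
      obtain ⟨_, hs', y, rfl⟩ := mem_closure_iff_nhds.1 (denseRange_stoneCechUnit p) s hs
      exact ⟨y, hs'⟩
    have hFp : Tendsto stoneCechUnit F (𝓝 p) := tendsto_comap
    have hFc : Tendsto c F (𝓝 (c x)) := by
      have := ((continuous_stoneCechExtend hc.continuous).tendsto p).comp hFp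
      rwa [hext, ← hx] at this
    have hFx : Tendsto id F (𝓝 x) := hc.tendsto_nhds_iff.2 hFc
    exact ⟨x, tendsto_nhds_unique ((continuous_stoneCechUnit.tendsto x).comp hFx) hFp⟩
  · rintro _ ⟨x, rfl⟩
    exact ⟨x, (congrFun hext x).symm⟩

theorem isSigmaCompact_stoneCechRemainder {X Z : Type*} [TopologicalSpace X]
    [TopologicalSpace Z] [CompactSpace Z] [T2Space Z] {c : X → Z} (hc : IsInducing c)
    (hrem : IsSigmaCompact (range c)ᶜ) : IsSigmaCompact (StoneCechRemainder X) := by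
  obtain ⟨K, hK, hKc⟩ := hrem
  refine ⟨fun n => stoneCechExtend hc.continuous ⁻¹' K n, fun n => ?_, ?_⟩
  · exact ((hK n).isClosed.preimage (continuous_stoneCechExtend hc.continuous)).isCompact
  · rw [← preimage_iUnion, hKc, preimage_compl, preimage_range_eq_range_stoneCechUnit hc]

theorem countable_compl_range_irrational_onePoint :
    (range fun x : {x : ℝ | Irrational x} => ((x : ℝ) : OnePoint ℝ))ᶜ.Countable := by
  refine ((countable_range fun q : ℚ => ((q : ℝ) : OnePoint ℝ)).insert OnePoint.infty).mono ?_
  intro z hz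
  induction z using OnePoint.rec with
  | infty => exact mem_insert _ _
  | coe x =>
    by_cases hx : Irrational x
    · exact absurd ⟨⟨x, hx⟩, rfl⟩ hz
    · obtain ⟨q, rfl⟩ : x ∈ range ((↑) : ℚ → ℝ) := not_not.1 hx
      exact mem_insert_of_mem _ ⟨q, rfl⟩

theorem menger_stoneCechRemainder_irrational :
    Menger (StoneCechRemainder {x : ℝ | Irrational x}) :=
  (isSigmaCompact_stoneCechRemainder
    (OnePoint.isOpenEmbedding_coe.isInducing.comp IsInducing.subtypeVal)
    countable_compl_range_irrational_onePoint.isSigmaCompact).menger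

theorem SfinAA.menger {X : Type*} [TopologicalSpace X] (h : SfinAA X) : Menger X := by
  intro U hU
  obtain ⟨V, hV, hcompact⟩ := h (fun n => U (n + 1)) fun n =>
    ⟨(hU (n + 1)).1, by rw [(hU (n + 1)).2, compl_univ]; exact isCompact_empty⟩
  obtain ⟨V₀, hV₀U, hV₀fin, hV₀⟩ := hcompact.elim_finite_subcover_image (hU 0).1
    (by rw [← sUnion_eq_biUnion, (hU 0).2]; exact subset_univ _)
  refine ⟨fun n => Nat.casesOn n V₀ V, fun n => ?_, eq_univ_of_forall fun x => ?_⟩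
  · cases n with
    | zero => exact ⟨hV₀U, hV₀fin⟩
    | succ n => exact hV n
  · by_cases hx : x ∈ ⋃₀ ⋃ n, V n
    · obtain ⟨s, hs, hxs⟩ := hx
      obtain ⟨n, hn⟩ := mem_iUnion.1 hs
      exact ⟨s, mem_iUnion.2 ⟨n + 1, hn⟩, hxs⟩
    · obtain ⟨s, hs, hxs⟩ := mem_iUnion₂.1 (hV₀ hx)
      exact ⟨s, mem_iUnion.2 ⟨0, hs⟩, hxs⟩

theorem Menger.exists_iUnion_eq_univ {X : Type*} [TopologicalSpace X] (hX : Menger X)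
    {A : ℕ → ℕ → Set X} (hopen : ∀ n k, IsOpen (A n k)) (hmono : ∀ n, Monotone (A n))
    (hcover : ∀ n, ⋃ k, A n k = univ) : ∃ K : ℕ → ℕ, ⋃ n, A n (K n) = univ := by
  obtain ⟨V, hV, hVcover⟩ := hX (fun n => range (A n)) fun n =>
    ⟨forall_mem_range.2 (hopen n), by rw [sUnion_range, hcover n]⟩
  have hbound : ∀ n, ∃ K, ∀ s ∈ V n, s ⊆ A n K := fun n => by
    have : Finite (V n) := (hV n).2.to_subtype
    choose k hk using fun s : V n => (hV n).1 s.2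
    obtain ⟨K, hK⟩ := (finite_range k).bddAbove
    refine ⟨K, fun s hs => ?_⟩
    rw [← show A n (k ⟨s, hs⟩) = s from hk ⟨s, hs⟩]
    exact hmono n (hK ⟨⟨s, hs⟩, rfl⟩)
  choose K hK using hbound
  refine ⟨K, eq_univ_of_forall fun x => ?_⟩
  obtain ⟨s, hs, hxs⟩ := hVcover ▸ mem_univ x
  obtain ⟨n, hn⟩ := mem_iUnion.1 hs
  exact mem_iUnion.2 ⟨n, hK n s hn hxs⟩

/-- The binary digit of `x` in position `j + 1` after the point is `1`. -/
def IsBinaryDigitOne (x : ℝ) (j : ℕ) : Prop := 1 / 2 ≤ Int.fract (2 ^ j * x)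

noncomputable instance (x : ℝ) : DecidablePred (IsBinaryDigitOne x) :=
  fun _ => Real.decidableLE _ _

noncomputable def oneDigitCount (x : ℝ) (k : ℕ) : ℕ := Nat.count (IsBinaryDigitOne x) k

theorem Irrational.two_pow_mul {x : ℝ} (hx : Irrational x) (j : ℕ) : Irrational (2 ^ j * x) := by
  exact_mod_cast hx.natCast_mul (pow_ne_zero j two_ne_zero)

theorem Irrational.eventually_isBinaryDigitOne_iff {x : ℝ} (hx : Irrational x) (j : ℕ) :
    ∀ᶠ y in 𝓝 x, IsBinaryDigitOne y j ↔ IsBinaryDigitOne x j := by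
  have hz := hx.two_pow_mul j
  have hcont : ContinuousAt (fun y : ℝ => Int.fract (2 ^ j * y)) x :=
    (continuousAt_fract (hz.ne_int _)).comp (continuousAt_const.mul continuousAt_id)
  have hhalf : Int.fract (2 ^ j * x) ≠ 1 / 2 := fun h => (hz.sub_intCast ⌊2 ^ j * x⌋).ne_rat (1 / 2)
    (by rw [← Int.self_sub_floor] at h; push_cast; exact h)
  rcases hhalf.lt_or_gt with h | h
  · filter_upwards [hcont.eventually (gt_mem_nhds h)] with y hy
    exact iff_of_false hy.not_ge h.not_ge
  · filter_upwards [hcont.eventually (lt_mem_nhds h)] with y hy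
    exact iff_of_true hy.le h.le

theorem isLocallyConstant_oneDigitCount (k : ℕ) :
    IsLocallyConstant fun x : {x : ℝ | Irrational x} => oneDigitCount x k := by
  refine (IsLocallyConstant.iff_eventually_eq _).2 fun x => ?_
  have h := (eventually_all_finset (Finset.range k)).2 fun j _ =>
    x.2.eventually_isBinaryDigitOne_iff j
  filter_upwards [continuous_subtype_val.continuousAt.eventually h] with y hy
  simp only [oneDigitCount, Nat.count_eq_card_filter_range]
  exact congrArg Finset.card (Finset.filter_congr hy)

theorem fract_two_mul_of_fract_lt_half {y : ℝ} (hy : Int.fract y < 1 / 2) :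
    Int.fract (2 * y) = 2 * Int.fract y := by
  rw [Int.fract_eq_iff]
  refine ⟨by positivity, by linarith, 2 * ⌊y⌋, ?_⟩
  rw [← Int.self_sub_floor]
  push_cast
  ring

theorem Irrational.infinite_setOf_isBinaryDigitOne {x : ℝ} (hx : Irrational x) :
    {j | IsBinaryDigitOne x j}.Infinite := by
  intro hfin
  obtain ⟨J, hJ⟩ := hfin.bddAbove
  have hzero : ∀ j, J < j → Int.fract (2 ^ j * x) < 1 / 2 := fun j hj =>
    not_le.1 fun h => hj.not_ge (hJ h)
  have hdouble : ∀ t, Int.fract (2 ^ (J + 1 + t) * x) = 2 ^ t * Int.fract (2 ^ (J + 1) * x) := by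
    intro t
    induction t with
    | zero => simp
    | succ t ih =>
      rw [← add_assoc, pow_succ', mul_assoc, fract_two_mul_of_fract_lt_half (hzero _ (by omega)),
        ih, pow_succ']
      ring
  have hpos : 0 < Int.fract (2 ^ (J + 1) * x) := Int.fract_pos.2 ((hx.two_pow_mul _).ne_int _)
  obtain ⟨t, ht⟩ := pow_unbounded_of_one_lt (Int.fract (2 ^ (J + 1) * x))⁻¹ one_lt_two
  have := Int.fract_lt_one (2 ^ (J + 1 + t) * x)
  rw [hdouble, ← lt_div_iff₀ hpos, one_div] at this
  exact this.not_gt ht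

theorem Irrational.exists_lt_oneDigitCount {x : ℝ} (hx : Irrational x) (n : ℕ) :
    ∃ k, n < oneDigitCount x k := by
  obtain ⟨k, hk⟩ := Nat.surjective_count_of_infinite_setOfPred hx.infinite_setOf_isBinaryDigitOne
    (n + 1)
  exact ⟨k, by rw [oneDigitCount, hk]; exact n.lt_succ_self⟩

noncomputable def binarySum (S : Set ℕ) : ℝ := ∑' p, S.indicator (fun p => (1 / 2 : ℝ) ^ (p + 1)) p

theorem summable_half_pow_succ : Summable fun p : ℕ => (1 / 2 : ℝ) ^ (p + 1) :=
  (summable_geometric_two.mul_right _).congr fun p => (pow_succ _ p).symm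

theorem summable_indicator_half_pow (S : Set ℕ) :
    Summable (S.indicator fun p => (1 / 2 : ℝ) ^ (p + 1)) :=
  summable_half_pow_succ.indicator S

theorem binarySum_nonneg (S : Set ℕ) : 0 ≤ binarySum S :=
  tsum_nonneg fun p => Set.indicator_nonneg (fun p _ => by positivity) p

theorem binarySum_lt_one {S : Set ℕ} {p : ℕ} (hp : p ∉ S) : binarySum S < 1 := by
  calc binarySum S < ∑' p : ℕ, (1 / 2 : ℝ) ^ (p + 1) :=
        (summable_indicator_half_pow S).tsum_lt_tsum (i := p)
          (Set.indicator_le_self' fun p _ => by positivity) (by simp [hp]) summable_half_pow_succ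
    _ = 1 := by simp only [pow_succ, tsum_mul_right, tsum_geometric_two]; norm_num

theorem binarySum_eq (S : Set ℕ) :
    binarySum S = S.indicator (fun _ => 1 / 2) 0 + binarySum ((· + 1) ⁻¹' S) / 2 := by
  rw [binarySum, (summable_indicator_half_pow S).tsum_eq_zero_add, binarySum, ← tsum_div_const]
  congr 1
  · simp [Set.indicator]
  · congr 1; ext p
    by_cases hp : p + 1 ∈ S <;> simp [Set.indicator, hp, pow_succ, div_eq_mul_inv]

theorem exists_two_pow_mul_binarySum (S : Set ℕ) (j : ℕ) :
    ∃ N : ℤ, 2 ^ j * binarySum S = N + binarySum ((· + j) ⁻¹' S) := by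
  induction j with
  | zero => exact ⟨0, by simp⟩
  | succ j ih =>
    obtain ⟨N, hN⟩ := ih
    have hshift : (· + 1) ⁻¹' ((· + j) ⁻¹' S) = (· + (j + 1)) ⁻¹' S := by
      ext p; simp [add_assoc, add_comm 1 j]
    refine ⟨2 * N + S.indicator 1 j, ?_⟩
    rw [pow_succ', mul_assoc, hN, binarySum_eq ((· + j) ⁻¹' S), hshift]
    by_cases h0 : j ∈ S <;> simp [Set.indicator, h0] <;> ring

theorem half_le_binarySum_iff {S : Set ℕ} {p : ℕ} (hp : p + 1 ∉ S) :
    1 / 2 ≤ binarySum S ↔ 0 ∈ S := by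
  have hlt : binarySum ((· + 1) ⁻¹' S) < 1 := binarySum_lt_one (p := p) hp
  have hnn := binarySum_nonneg ((· + 1) ⁻¹' S)
  rw [binarySum_eq]
  by_cases h0 : 0 ∈ S <;> simp only [Set.indicator, h0, if_true, if_false, iff_true, iff_false]
  · linarith
  · linarith

theorem isBinaryDigitOne_binarySum_iff {S : Set ℕ} (hS : Sᶜ.Infinite) (j : ℕ) :
    IsBinaryDigitOne (binarySum S) j ↔ j ∈ S := by
  obtain ⟨q, hqS, hjq⟩ := hS.exists_gt (j + 1)
  obtain ⟨N, hN⟩ := exists_two_pow_mul_binarySum S j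
  have hfract : Int.fract (2 ^ j * binarySum S) = binarySum ((· + j) ⁻¹' S) := by
    rw [hN, Int.fract_intCast_add, Int.fract_eq_self]
    have hq : q - j ∉ (· + j) ⁻¹' S := by simpa [show q - j + j = q by omega] using hqS
    exact ⟨binarySum_nonneg _, binarySum_lt_one hq⟩
  have hq : q - j - 1 + 1 ∉ (· + j) ⁻¹' S := by
    simpa [show q - j - 1 + 1 + j = q by omega] using hqS
  rw [IsBinaryDigitOne, hfract, half_le_binarySum_iff hq]
  simp

theorem binarySum_injOn : InjOn binarySum {S | Sᶜ.Infinite} := fun S hS T hT hST => by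
  ext j
  rw [← isBinaryDigitOne_binarySum_iff hS, ← isBinaryDigitOne_binarySum_iff hT, hST]

theorem exists_irrational_binarySum_image {s : ℕ → ℕ} (hs : Function.Injective s)
    (hc : (range s)ᶜ.Infinite) : ∃ A : Set ℕ, Irrational (binarySum (s '' A)) := by
  -- Otherwise `A ↦ binarySum (s '' A)` would inject `Set ℕ` into `ℚ`.
  by_contra! h
  choose q hq using fun A => not_not.1 (h A)
  have hco : ∀ A, (s '' A)ᶜ.Infinite := fun A =>
    hc.mono (compl_subset_compl.2 (image_subset_range s A))
  refine Function.cantor_injective (fun A => Encodable.encode (q A)) fun A B hAB => ?_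
  refine image_injective.2 hs (binarySum_injOn (hco A) (hco B) ?_)
  rw [← hq, ← hq, Encodable.encode_injective hAB]

theorem exists_irrational_oneDigitCount_le (K : ℕ → ℕ) :
    ∃ x : ℝ, Irrational x ∧ ∀ n, oneDigitCount x (K n) ≤ n := by
  set s : ℕ → ℕ := fun i => 2 * (i + ∑ m ∈ Finset.range (i + 1), K m) with hs_def
  have hs : StrictMono s := strictMono_nat_of_lt_succ fun i => by
    simp only [hs_def, Finset.sum_range_succ _ (i + 1)]; omega
  have hK : ∀ n i, n ≤ i → K n ≤ s i := fun n i hni => by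
    have := Finset.single_le_sum (fun m _ => Nat.zero_le (K m))
      (Finset.mem_range.2 (by omega : n < i + 1))
    simp only [hs_def]; omega
  have hc : (range s)ᶜ.Infinite := infinite_of_forall_exists_gt fun a =>
    ⟨2 * a + 1, fun ⟨i, hi⟩ => by simp only [hs_def] at hi; omega, by omega⟩
  obtain ⟨A, hA⟩ := exists_irrational_binarySum_image hs.injective hc
  refine ⟨_, hA, fun n => ?_⟩
  have hdig := isBinaryDigitOne_binarySum_iff
    (hc.mono (compl_subset_compl.2 (image_subset_range s A)))
  calc oneDigitCount (binarySum (s '' A)) (K n)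
      ≤ ((Finset.range n).image s).card := by
        rw [oneDigitCount, Nat.count_eq_card_filter_range]
        refine Finset.card_le_card fun j hj => ?_
        obtain ⟨hjK, hj⟩ := Finset.mem_filter.1 hj
        obtain ⟨i, -, rfl⟩ := (hdig j).1 hj
        refine Finset.mem_image_of_mem s (Finset.mem_range.2 ?_)
        by_contra! hni
        exact (Finset.mem_range.1 hjK).not_ge (hK n i hni)
    _ ≤ n := Finset.card_image_le.trans (Finset.card_range n).le

theorem not_menger_irrational : ¬ Menger {x : ℝ | Irrational x} := fun hM => by
  obtain ⟨K, hK⟩ := hM.exists_iUnion_eq_univ (A := fun n k => {x | n < oneDigitCount x k})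
    (fun n k => isLocallyConstant_oneDigitCount k {m | n < m})
    (fun n k l hkl x hx => hx.trans_le (Nat.count_monotone _ hkl))
    (fun n => eq_univ_of_forall fun x => mem_iUnion.2 (x.2.exists_lt_oneDigitCount n))
  obtain ⟨x, hx, hcount⟩ := exists_irrational_oneDigitCount_le K
  obtain ⟨n, hn⟩ := mem_iUnion.1 (hK ▸ mem_univ (⟨x, hx⟩ : {x : ℝ | Irrational x}))
  exact (hcount n).not_gt hn

theorem stmt19 :
    Menger ↥(StoneCechRemainder {x : ℝ | Irrational x}) ∧
      ¬ SfinAA {x : ℝ | Irrational x} :=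
  ⟨menger_stoneCechRemainder_irrational, fun h => not_menger_irrational h.menger⟩
end
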